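/- The fourth moment of the Fejér kernel satisfies \(m_4(K_m) := \int_{-\pi}^{\pi} y^4 K_m(y)\,dy = \frac{8\pi^2\log 2 - 36\zeta(3)}{m} + O(m^{-2})\) as \(m\to\infty\). -/

import Mathlib

open Finset

noncomputable def fejerKernel (m : ℕ) (s : ℝ) : ℝ :=
  1 / (2 * Real.pi) +
    (1 / Real.pi) * ∑ k ∈ Finset.Icc 1 m, (1 - (k : ℝ) / (m + 1)) * Real.cos (k * s)

noncomputable def zeta3 : ℝ := ∑' n : ℕ, 1 / ((n : ℝ) + 1) ^ 3

open Filter Topology Real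

/-! Integrating term by term,
`m₄(K_m) = π⁴/5 + ∑_{k ≤ m} (1 - k/(m+1)) · 8(-1)^k (π²k² - 6)/k⁴`,
which is `-8π² η_m(2) + 48 η_m(4) + 8/(m+1) · (π² η_m(1) - 6 η_m(3))` in terms of the partial sums
`η_m(p) = ∑_{k ≤ m} (-1)^(k-1)/k^p` of the Dirichlet eta function. Since `η(1) = log 2`,
`η(2) = π²/12`, `η(3) = 3ζ(3)/4` and `η(4) = 7π⁴/720`, the constant terms cancel, and the
alternating series estimate `|η_m(p) - η(p)| ≤ (m+1)^(-p)` leaves a remainder of order `m⁻²`. -/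

theorem Antitone.abs_alternating_series_sub_le {E : Type*} [Field E] [LinearOrder E]
    [IsStrictOrderedRing E] [TopologicalSpace E] [OrderClosedTopology E] {f : ℕ → E} {l : E}
    (hfa : Antitone f) (hfl : Tendsto (fun n ↦ ∑ i ∈ range n, (-1) ^ i * f i) atTop (𝓝 l))
    (n : ℕ) : |∑ i ∈ range n, (-1) ^ i * f i - l| ≤ f n := by
  rw [abs_sub_le_iff]
  obtain ⟨k, rfl | rfl⟩ := Nat.even_or_odd' n
  · have lower := hfa.alternating_series_le_tendsto hfl k
    have upper := hfa.tendsto_le_alternating_series hfl k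
    simp only [sum_range_succ, even_two, Even.mul_right, Even.neg_pow, one_pow, one_mul] at upper
    constructor <;> linarith
  · have lower := hfa.alternating_series_le_tendsto hfl (k + 1)
    have upper := hfa.tendsto_le_alternating_series hfl k
    rw [Nat.mul_succ, sum_range_succ, pow_succ, Even.neg_pow (by simp), one_pow] at lower
    constructor <;> linarith

/-- `altPowSum p n = η_n(p)`, with the summation index shifted down by one. -/
noncomputable def altPowSum (p n : ℕ) : ℝ :=
  ∑ i ∈ range n, (-1) ^ i * (1 / ((i : ℝ) + 1) ^ p)

theorem antitone_one_div_nat_add_one_pow (p : ℕ) :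
    Antitone fun i : ℕ ↦ 1 / ((i : ℝ) + 1) ^ p := fun a b hab ↦ by
  dsimp only
  gcongr

theorem abs_altPowSum_sub_le {p : ℕ} {L : ℝ} (h : Tendsto (altPowSum p) atTop (𝓝 L))
    (n : ℕ) : |altPowSum p n - L| ≤ 1 / ((n : ℝ) + 1) ^ p :=
  (antitone_one_div_nat_add_one_pow p).abs_alternating_series_sub_le h n

theorem tendsto_altPowSum_of_hasSum {p : ℕ} {Z : ℝ}
    (h : HasSum (fun n : ℕ ↦ 1 / ((n : ℝ) + 1) ^ p) Z) :
    Tendsto (altPowSum p) atTop (𝓝 ((1 - 2 / 2 ^ p) * Z)) := by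
  set u : ℕ → ℝ := fun n ↦ 1 / ((n : ℝ) + 1) ^ p
  have hu : (fun k ↦ u (2 * k + 1)) = fun k ↦ u k / 2 ^ p := by
    funext k
    simp only [u]
    push_cast
    rw [div_div, ← mul_pow]
    ring_nf
  have hodd : HasSum (fun k ↦ u (2 * k + 1)) (Z / 2 ^ p) := hu ▸ h.div_const _
  obtain ⟨E, heven⟩ : Summable fun k ↦ u (2 * k) :=
    h.summable.comp_injective (mul_right_injective₀ two_ne_zero)
  have hE : E = Z - Z / 2 ^ p := by
    linarith [(heven.even_add_odd hodd).unique h]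
  have halt : HasSum (fun n ↦ (-1) ^ n * u n) (E - Z / 2 ^ p) := by
    refine HasSum.even_add_odd (by simpa using heven) ?_
    simpa [pow_succ] using hodd.neg
  rw [show (1 - 2 / 2 ^ p) * Z = E - Z / 2 ^ p by rw [hE]; ring]
  exact halt.tendsto_sum_nat

theorem hasSum_one_div_nat_add_one_pow {p : ℕ} (hp : p ≠ 0) {Z : ℝ}
    (h : HasSum (fun n : ℕ ↦ 1 / (n : ℝ) ^ p) Z) :
    HasSum (fun n : ℕ ↦ 1 / ((n : ℝ) + 1) ^ p) Z := by
  rw [← hasSum_nat_add_iff' 1] at h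
  simpa [hp] using h

theorem tendsto_altPowSum_two : Tendsto (altPowSum 2) atTop (𝓝 (π ^ 2 / 12)) := by
  convert tendsto_altPowSum_of_hasSum (hasSum_one_div_nat_add_one_pow two_ne_zero hasSum_zeta_two)
    using 2
  ring

theorem tendsto_altPowSum_three : Tendsto (altPowSum 3) atTop (𝓝 (3 / 4 * zeta3)) := by
  have hs : Summable fun n : ℕ ↦ 1 / ((n : ℝ) + 1) ^ 3 := by
    exact_mod_cast (summable_nat_add_iff 1).mpr (Real.summable_one_div_nat_pow.mpr (by norm_num))
  convert tendsto_altPowSum_of_hasSum hs.hasSum using 2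
  rw [zeta3]
  ring

theorem tendsto_altPowSum_four : Tendsto (altPowSum 4) atTop (𝓝 (7 * π ^ 4 / 720)) := by
  convert tendsto_altPowSum_of_hasSum (hasSum_one_div_nat_add_one_pow four_ne_zero hasSum_zeta_four)
    using 2
  ring

theorem altPowSum_one_two_mul (n : ℕ) :
    altPowSum 1 (2 * n) = harmonic (2 * n) - harmonic n := by
  induction n with
  | zero => simp [altPowSum]
  | succ n ih =>
    rw [show 2 * (n + 1) = 2 * n + 1 + 1 by ring, altPowSum, sum_range_succ, sum_range_succ,
      ← altPowSum, ih, harmonic_succ, harmonic_succ, harmonic_succ]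
    push_cast
    simp only [pow_succ, (even_two_mul n).neg_one_pow]
    field_simp
    ring

theorem tendsto_harmonic_two_mul_sub_harmonic :
    Tendsto (fun n : ℕ ↦ (harmonic (2 * n) - harmonic n : ℝ)) atTop (𝓝 (log 2)) := by
  have h2n : Tendsto (fun n : ℕ ↦ (harmonic (2 * n) : ℝ) - log (2 * n)) atTop
      (𝓝 eulerMascheroniConstant) := by
    simpa [Function.comp_def] using
      tendsto_harmonic_sub_log.comp (tendsto_id.const_mul_atTop' two_pos)
  have := (h2n.sub tendsto_harmonic_sub_log).add_const (log 2)
  rw [sub_self, zero_add] at this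
  refine this.congr' ?_
  filter_upwards [eventually_ne_atTop 0] with n hn
  rw [log_mul two_ne_zero (by exact_mod_cast hn)]
  ring

theorem tendsto_altPowSum_one : Tendsto (altPowSum 1) atTop (𝓝 (log 2)) := by
  obtain ⟨l, hl⟩ :=
    (antitone_one_div_nat_add_one_pow 1).tendsto_alternating_series_of_tendsto_zero
      (by simpa using tendsto_one_div_add_atTop_nhds_zero_nat (𝕜 := ℝ))
  change Tendsto (altPowSum 1) atTop (𝓝 l) at hl
  have heven := hl.comp (tendsto_id.const_mul_atTop' two_pos)
  obtain rfl : l = log 2 := tendsto_nhds_unique heven <| by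
    simpa only [Function.comp_def, id, altPowSum_one_two_mul] using
      tendsto_harmonic_two_mul_sub_harmonic
  exact hl

theorem hasDerivAt_pow_four_mul_cos_antideriv {c : ℝ} (hc : c ≠ 0) (y : ℝ) :
    HasDerivAt (fun y ↦ y ^ 4 * sin (c * y) / c + 4 * y ^ 3 * cos (c * y) / c ^ 2
        - 12 * y ^ 2 * sin (c * y) / c ^ 3 - 24 * y * cos (c * y) / c ^ 4
        + 24 * sin (c * y) / c ^ 5)
      (y ^ 4 * cos (c * y)) y := by
  have hcy : HasDerivAt (fun y ↦ c * y) c y := by simpa using (hasDerivAt_id y).const_mul c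
  have hsin := hcy.sin
  have hcos := hcy.cos
  refine (((((((hasDerivAt_pow 4 y).mul hsin).div_const c).add
    ((((hasDerivAt_pow 3 y).const_mul 4).mul hcos).div_const (c ^ 2))).sub
    ((((hasDerivAt_pow 2 y).const_mul 12).mul hsin).div_const (c ^ 3))).sub
    ((((hasDerivAt_id y).const_mul 24).mul hcos).div_const (c ^ 4))).add
    ((hsin.const_mul 24).div_const (c ^ 5))).congr_deriv ?_
  simp only [id]
  field_simp
  ring

theorem integral_pow_four_mul_cos_nat_mul {k : ℕ} (hk : k ≠ 0) :
    ∫ y in (-π)..π, y ^ 4 * cos (k * y) = 8 * π * (-1) ^ k * (π ^ 2 * k ^ 2 - 6) / k ^ 4 := by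
  have hk' : (k : ℝ) ≠ 0 := by exact_mod_cast hk
  rw [intervalIntegral.integral_eq_sub_of_hasDerivAt
    (fun y _ ↦ hasDerivAt_pow_four_mul_cos_antideriv hk' y)
    ((by fun_prop : Continuous _).intervalIntegrable _ _)]
  simp only [mul_neg, sin_neg, cos_neg, sin_nat_mul_pi, cos_nat_mul_pi]
  field_simp
  ring

theorem integral_pow_four_mul_fejerKernel (m : ℕ) :
    ∫ y in (-π)..π, y ^ 4 * fejerKernel m y =
      π ^ 4 / 5 + ∑ k ∈ Icc 1 m, (1 - (k : ℝ) / (m + 1)) *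
        (8 * (-1) ^ k * (π ^ 2 * k ^ 2 - 6) / k ^ 4) := by
  have hint {f : ℝ → ℝ} (hf : Continuous f) : IntervalIntegrable f MeasureTheory.volume (-π) π :=
    hf.intervalIntegrable _ _
  simp only [fejerKernel, mul_add, mul_sum]
  rw [intervalIntegral.integral_add (hint (by fun_prop)) (hint (by fun_prop)),
    intervalIntegral.integral_finsetSum fun k _ ↦ hint (by fun_prop)]
  congr 1
  · rw [intervalIntegral.integral_mul_const, integral_pow]
    field_simp
    ring
  · refine sum_congr rfl fun k hk ↦ ?_
    simp_rw [mul_left_comm (_ ^ 4 : ℝ)]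
    rw [intervalIntegral.integral_const_mul, intervalIntegral.integral_const_mul,
      integral_pow_four_mul_cos_nat_mul (by grind)]
    field_simp

theorem sum_fejerWeight_mul_eq_altPowSum (m : ℕ) :
    ∑ k ∈ Icc 1 m, (1 - (k : ℝ) / (m + 1)) * (8 * (-1) ^ k * (π ^ 2 * k ^ 2 - 6) / k ^ 4) =
      -8 * π ^ 2 * altPowSum 2 m + 48 * altPowSum 4 m +
        8 / (m + 1) * (π ^ 2 * altPowSum 1 m - 6 * altPowSum 3 m) := by
  rw [← Finset.Ico_add_one_right_eq_Icc, sum_Ico_eq_sum_range, Nat.add_sub_cancel]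
  simp only [altPowSum, mul_sum, ← sum_add_distrib, ← sum_sub_distrib]
  refine sum_congr rfl fun i _ ↦ ?_
  push_cast
  field_simp
  ring

theorem abs_fourthMoment_remainder_le {x e₁ e₂ e₃ e₄ A : ℝ} (hx : 1 ≤ x)
    (h₁ : |e₁| ≤ 1 / (x + 1) ^ 1) (h₂ : |e₂| ≤ 1 / (x + 1) ^ 2)
    (h₃ : |e₃| ≤ 1 / (x + 1) ^ 3) (h₄ : |e₄| ≤ 1 / (x + 1) ^ 4) :
    |-8 * π ^ 2 * e₂ + 48 * e₄ + 8 / (x + 1) * (π ^ 2 * e₁ - 6 * e₃) - A / (x * (x + 1))| ≤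
      (16 * π ^ 2 + 96 + |A|) / x ^ 2 := by
  have hx₀ : 0 < x := by linarith
  have hinv {p : ℕ} (hp : 1 ≤ p) : 1 / (x + 1) ^ p ≤ 1 / x := by
    gcongr
    exact le_self_pow₀ (by linarith) (by omega) |>.trans' (by linarith)
  have hinv2 {p : ℕ} (hp : 2 ≤ p) : 1 / (x + 1) ^ p ≤ 1 / x ^ 2 := by
    gcongr
    exact (pow_le_pow_left₀ hx₀.le (by linarith) 2).trans (pow_le_pow_right₀ (by linarith) hp)
  calc |-8 * π ^ 2 * e₂ + 48 * e₄ + 8 / (x + 1) * (π ^ 2 * e₁ - 6 * e₃) - A / (x * (x + 1))|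
      ≤ |-8 * π ^ 2 * e₂| + |48 * e₄| + |8 / (x + 1) * (π ^ 2 * e₁ - 6 * e₃)|
          + |A / (x * (x + 1))| :=
        (abs_sub _ _).trans (by gcongr; exact abs_add_three _ _ _)
    _ ≤ 8 * π ^ 2 * |e₂| + 48 * |e₄| + 8 / x * (π ^ 2 * |e₁| + 6 * |e₃|)
          + |A| / (x * x) := by
        have hsub : |π ^ 2 * e₁ - 6 * e₃| ≤ π ^ 2 * |e₁| + 6 * |e₃| :=
          (abs_sub _ _).trans_eq (by simp [abs_mul])
        simp only [abs_mul, abs_div, abs_neg, abs_pow, abs_of_pos hx₀, abs_of_pos pi_pos,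
          abs_of_pos (by linarith : 0 < x + 1), Nat.abs_ofNat]
        gcongr <;> linarith
    _ ≤ 8 * π ^ 2 * (1 / x ^ 2) + 48 * (1 / x ^ 2) + 8 / x * (π ^ 2 * (1 / x) + 6 * (1 / x))
          + |A| / (x * x) := by
        gcongr
        exacts [h₂.trans (hinv2 le_rfl), h₄.trans (hinv2 (by norm_num)),
          h₁.trans (hinv le_rfl), h₃.trans (hinv (by norm_num))]
    _ = (16 * π ^ 2 + 96 + |A|) / x ^ 2 := by
        field_simp
        ring

theorem fejerKernel_fourth_moment :
    ∃ C : ℝ, 0 < C ∧ ∀ m : ℕ, 1 ≤ m →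
      |(∫ y in (-Real.pi)..Real.pi, y ^ 4 * fejerKernel m y)
          - (8 * Real.pi ^ 2 * Real.log 2 - 36 * zeta3) / m|
        ≤ C / (m : ℝ) ^ 2 := by
  set A := 8 * π ^ 2 * log 2 - 36 * zeta3
  refine ⟨16 * π ^ 2 + 96 + |A|, by positivity, fun m hm ↦ ?_⟩
  have hm₀ : (m : ℝ) ≠ 0 := by positivity
  have key : (∫ y in (-π)..π, y ^ 4 * fejerKernel m y) - A / m =
      -8 * π ^ 2 * (altPowSum 2 m - π ^ 2 / 12) + 48 * (altPowSum 4 m - 7 * π ^ 4 / 720) +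
        8 / (m + 1) * (π ^ 2 * (altPowSum 1 m - log 2) - 6 * (altPowSum 3 m - 3 / 4 * zeta3)) -
        A / (m * (m + 1)) := by
    rw [integral_pow_four_mul_fejerKernel, sum_fejerWeight_mul_eq_altPowSum]
    field_simp
    ring
  rw [key]
  exact abs_fourthMoment_remainder_le (by exact_mod_cast hm)
    (abs_altPowSum_sub_le tendsto_altPowSum_one m) (abs_altPowSum_sub_le tendsto_altPowSum_two m)
    (abs_altPowSum_sub_le tendsto_altPowSum_three m) (abs_altPowSum_sub_le tendsto_altPowSum_four m)
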